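/- arXiv:2311.16020 — 9 statements merged into one kernel-verified Lean document; each statement's English description precedes it below -/
import Mathlib

section
/- Let C be a category with finite coproducts and let G be an object of C such that every object X of C admits an epimorphism G^{⊕n} → X from a finite coproduct of copies of G for some n ≥ 1. Let θ : 𝟭_C ⟶ 𝟭_C be a natural transformation of the identity functor and set ν := θ_G ∈ End(G). Then: (i) ν commutes with every endomorphism of G; and (ii) for every natural number ℓ ≥ 1, one has θ_X^ℓ = id_X for all objects X of C if and only if ν^ℓ = id_G. In particular, the order of θ in the monoid of natural endomorphisms of the identity functor equals the order of ν in End(G). -/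
open CategoryTheory CategoryTheory.Limits

universe v u

lemma pow_conj {C : Type u} [Category.{v} C] {X Y : C} (p : X ⟶ Y)
    (a : CategoryTheory.End X) (b : CategoryTheory.End Y)
    (h : p ≫ (b : Y ⟶ Y) = (a : X ⟶ X) ≫ p) :
    ∀ ℓ : ℕ, p ≫ ((b ^ ℓ : CategoryTheory.End Y) : Y ⟶ Y)
      = ((a ^ ℓ : CategoryTheory.End X) : X ⟶ X) ≫ p := by
  intro ℓ
  induction ℓ with
  | zero => simp [pow_zero, CategoryTheory.End.one_def]
  | succ n ih =>
    have hb : ((b ^ (n+1) : CategoryTheory.End Y) : Y ⟶ Y)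
        = (b : Y ⟶ Y) ≫ ((b ^ n : CategoryTheory.End Y) : Y ⟶ Y) := by
      rw [pow_succ]; rfl
    have ha : ((a ^ (n+1) : CategoryTheory.End X) : X ⟶ X)
        = (a : X ⟶ X) ≫ ((a ^ n : CategoryTheory.End X) : X ⟶ X) := by
      rw [pow_succ]; rfl
    rw [hb, ha, ← Category.assoc, h, Category.assoc, ih, ← Category.assoc]

theorem stmt0 {C : Type u} [Category.{v} C] [HasFiniteCoproducts C]
    (G : C)
    (hG : ∀ X : C, ∃ (n : ℕ) (p : (∐ fun _ : Fin n => G) ⟶ X), 1 ≤ n ∧ Epi p)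
    (θ : 𝟭 C ⟶ 𝟭 C) (ν : CategoryTheory.End G) (hν : ν = θ.app G) :
    (∀ f : CategoryTheory.End G, f * ν = ν * f) ∧
      ∀ ℓ : ℕ, 1 ≤ ℓ →
        ((∀ X : C, ∀ θX : CategoryTheory.End X, θX = θ.app X → θX ^ ℓ = 1) ↔ ν ^ ℓ = 1) := by
  constructor
  · intro f
    have := θ.naturality (f : G ⟶ G)
    simp only [Functor.id_obj, Functor.id_map] at this
    show (ν : G ⟶ G) ≫ (f : G ⟶ G) = (f : G ⟶ G) ≫ (ν : G ⟶ G)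
    rw [hν]; exact this.symm
  · intro ℓ _
    constructor
    · intro h
      exact h G ν hν
    · intro hpow X θX hθX
      obtain ⟨n, p, hn, hp⟩ := hG X
      haveI := hp
      let S : C := (∐ fun _ : Fin n => G)
      let σ : CategoryTheory.End S := θ.app S
      have hσ : σ = θ.app S := rfl
      -- σ^ℓ = 1
      have hσpow : σ ^ ℓ = 1 := by
        show ((σ ^ ℓ : CategoryTheory.End S) : S ⟶ S) = 𝟙 S
        apply Sigma.hom_ext
        intro i
        have hnat : (Sigma.ι (fun _ : Fin n => G) i) ≫ (σ : S ⟶ S)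
            = (ν : G ⟶ G) ≫ (Sigma.ι (fun _ : Fin n => G) i) := by
          have := θ.naturality (Sigma.ι (fun _ : Fin n => G) i)
          simp only [Functor.id_obj, Functor.id_map] at this
          rw [hσ, hν]; exact this
        have := pow_conj (Sigma.ι (fun _ : Fin n => G) i) ν σ hnat ℓ
        rw [this, hpow]
        simp [CategoryTheory.End.one_def]
        exact (Category.comp_id _).symm
      -- transfer along epi p
      have hnatp : p ≫ (θX : X ⟶ X) = (σ : S ⟶ S) ≫ p := by
        have := θ.naturality p
        simp only [Functor.id_obj, Functor.id_map] at this
        rw [hθX, hσ]; exact this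
      have := pow_conj p σ θX hnatp ℓ
      rw [hσpow] at this
      simp only [CategoryTheory.End.one_def, Category.id_comp] at this
      show (θX ^ ℓ : CategoryTheory.End X) = 𝟙 X
      exact hp.left_cancellation _ _ (by rw [this, Category.comp_id]; exact Category.id_comp p)
end

section
/- Let C be a category with finite coproducts and let G be an object of C such that every object X of C admits an epimorphism G^{⊕n} → X from a finite coproduct of copies of G for some n ≥ 1. Then the map sending a natural transformation θ : 𝟭_C ⟶ 𝟭_C to its component θ_G ∈ End(G) is injective, and its image is contained in the center of the monoid End(G). -/
open CategoryTheory CategoryTheory.Limits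

universe v u

theorem stmt1 {C : Type u} [Category.{v} C] [HasFiniteCoproducts C]
    (G : C)
    (hG : ∀ X : C, ∃ (n : ℕ) (p : (∐ fun _ : Fin n => G) ⟶ X), 1 ≤ n ∧ Epi p) :
    Function.Injective
        (fun θ : (𝟭 C ⟶ 𝟭 C) => (θ.app G : CategoryTheory.End G)) ∧
      ∀ θ : (𝟭 C ⟶ 𝟭 C), (θ.app G : CategoryTheory.End G) ∈ Set.center (CategoryTheory.End G) := by
  constructor
  · intro θ θ' h
    simp only at h
    ext X
    obtain ⟨n, p, hn, hp⟩ := hG X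
    have hcop : θ.app (∐ fun _ : Fin n => G) = θ'.app (∐ fun _ : Fin n => G) := by
      apply Sigma.hom_ext
      intro i
      have h1 := θ.naturality (Sigma.ι (fun _ : Fin n => G) i)
      have h2 := θ'.naturality (Sigma.ι (fun _ : Fin n => G) i)
      simp only [Functor.id_obj, Functor.id_map] at h1 h2
      rw [h1, h2, h]
    have h1 := θ.naturality p
    have h2 := θ'.naturality p
    simp only [Functor.id_obj, Functor.id_map] at h1 h2
    rw [← cancel_epi p] at *; rw [h1, h2, hcop]
  · intro θ
    refine Semigroup.mem_center_iff.mpr fun f => ?_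
    have := θ.naturality (f : G ⟶ G)
    simp only [Functor.id_obj, Functor.id_map] at this
    simp only [CategoryTheory.End.mul_def]
    exact this.symm
end

section
/- Let k be an algebraically closed field and C a k-linear abelian category all of whose Hom-spaces are finite-dimensional over k. Let X be a simple object of C and Y any object of C. Then for every k-linearly independent family f_1, …, f_n ∈ Hom(X,Y), the morphism X^{⊕n} → Y out of the biproduct of n copies of X whose i-th component is f_i is a monomorphism. (This expresses that the evaluation morphism Hom(X,Y) ⊗_k X → Y is a monomorphism when X is simple.) -/
open CategoryTheory CategoryTheory.Limits

universe v u

lemma comp_desc_eq_sum {k : Type u} [Field k]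
    {C : Type u} [Category.{v} C] [Preadditive C] [HasFiniteBiproducts C] [Linear k C]
    {X Y Z : C} (n : ℕ) (f : Fin n → (X ⟶ Y)) (g : Z ⟶ ⨁ fun _ : Fin n => X) :
    g ≫ biproduct.desc f = ∑ i, (g ≫ biproduct.π _ i) ≫ f i := by
  conv_lhs => rw [← Category.id_comp (biproduct.desc f), ← biproduct.total]
  rw [Preadditive.sum_comp, Preadditive.comp_sum]
  simp [biproduct.ι_desc, Category.assoc]

theorem stmt2 {k : Type u} [Field k] [IsAlgClosed k]
    {C : Type u} [Category.{v} C] [Abelian C] [HasFiniteBiproducts C] [Linear k C]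
    [∀ X Y : C, FiniteDimensional k (X ⟶ Y)]
    (X Y : C) [Simple X] (n : ℕ) (f : Fin n → (X ⟶ Y))
    (hf : LinearIndependent k f) :
    Mono (biproduct.desc f) := by
  induction n with
  | zero =>
    apply Preadditive.mono_of_kernel_zero
    have hz : IsZero (⨁ fun _ : Fin 0 => X) := by
      rw [IsZero.iff_id_eq_zero, ← biproduct.total]
      simp
    exact hz.eq_of_tgt _ _
  | succ n ih =>
    apply Preadditive.mono_of_kernel_zero
    by_contra hκ
    set κ : kernel (biproduct.desc f) ⟶ ⨁ fun _ : Fin (n + 1) => X :=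
      kernel.ι (biproduct.desc f) with hκdef
    have hκc : κ ≫ biproduct.desc f = 0 := kernel.condition _
    set κ0 : kernel (biproduct.desc f) ⟶ X := κ ≫ biproduct.π _ 0 with hκ0def
    set lam : kernel κ0 ⟶ kernel (biproduct.desc f) := kernel.ι κ0 with hlamdef
    by_cases hlam : lam = 0
    · -- kernel of κ0 is zero, so κ0 is mono
      have hκ0mono : Mono κ0 := Preadditive.mono_of_kernel_zero hlam
      have hκ0ne : κ0 ≠ 0 := by
        intro h0
        apply hκ
        have : (𝟙 (kernel (biproduct.desc f))) ≫ κ0 = 0 ≫ κ0 := by simp [h0]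
        have h1 : (𝟙 (kernel (biproduct.desc f))) = 0 := by
          exact (cancel_mono κ0).mp this
        rw [← Category.id_comp κ, h1, zero_comp]
      have : IsIso κ0 := isIso_of_mono_of_nonzero hκ0ne
      -- φ : X ⟶ biproduct, with φ ≫ desc f = 0
      set φ : X ⟶ ⨁ fun _ : Fin (n + 1) => X := inv κ0 ≫ κ with hφdef
      have hφc : φ ≫ biproduct.desc f = 0 := by
        rw [hφdef, Category.assoc, hκc, comp_zero]
      have hsum : ∑ i, (φ ≫ biproduct.π _ i) ≫ f i = 0 := by
        rw [← comp_desc_eq_sum (k := k), hφc]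
      -- each component is a scalar
      have hc : ∀ i, ∃ c : k, c • 𝟙 X = φ ≫ biproduct.π _ i := fun i =>
        endomorphism_simple_eq_smul_id k _
      choose c hcc using hc
      have hsum2 : ∑ i, c i • f i = 0 := by
        rw [← hsum]
        refine Finset.sum_congr rfl fun i _ => ?_
        rw [← hcc i, Linear.smul_comp, Category.id_comp]
      have hall := (Fintype.linearIndependent_iff.mp hf) c hsum2
      have hc0 : c 0 • 𝟙 X = 𝟙 X := by
        rw [hcc 0]
        show (inv κ0 ≫ κ) ≫ biproduct.π _ 0 = 𝟙 X
        rw [Category.assoc]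
        exact IsIso.inv_hom_id κ0
      rw [hall 0, zero_smul] at hc0
      exact id_nonzero X hc0.symm
    · -- lam ≠ 0 : contradict using induction hypothesis
      have hg : LinearIndependent k (f ∘ Fin.succ) :=
        hf.comp Fin.succ (Fin.succ_injective n)
      have hmono := ih (f ∘ Fin.succ) hg
      set μ : kernel κ0 ⟶ ⨁ fun _ : Fin n => X :=
        biproduct.lift (fun i => lam ≫ κ ≫ biproduct.π _ i.succ) with hμdef
      have hlam0 : lam ≫ κ0 = 0 := kernel.condition _
      have hμc : μ ≫ biproduct.desc (f ∘ Fin.succ) = 0 := by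
        rw [comp_desc_eq_sum (k := k)]
        have h2 : (lam ≫ κ) ≫ biproduct.desc f = 0 := by
          rw [Category.assoc, hκc, comp_zero]
        rw [comp_desc_eq_sum (k := k)] at h2
        rw [Fin.sum_univ_succ] at h2
        have h4 : (lam ≫ κ) ≫ biproduct.π _ (0 : Fin (n + 1)) = 0 := by
          have h5 : (lam ≫ κ) ≫ biproduct.π (fun _ : Fin (n+1) => X) 0 = lam ≫ κ0 := by
            rw [Category.assoc]
          rw [h5, hlam0]
        have h3 : ((lam ≫ κ) ≫ biproduct.π _ (0 : Fin (n + 1))) ≫ f 0 = 0 := by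
          rw [h4, zero_comp]
        rw [h3, zero_add] at h2
        rw [← h2]
        refine Finset.sum_congr rfl fun i _ => ?_
        simp [hμdef]
      have hμ0 : μ = 0 := by
        rw [← cancel_mono (biproduct.desc (f ∘ Fin.succ)), hμc, zero_comp]
      apply hlam
      have hlk : lam ≫ κ = 0 := by
        apply biproduct.hom_ext
        intro j
        rw [zero_comp]
        rcases Fin.eq_zero_or_eq_succ j with hj | ⟨i, hj⟩
        · subst hj
          rw [Category.assoc, ← hκ0def, hlam0]
        · subst hj
          have := congrArg (fun t => t ≫ biproduct.π (fun _ : Fin n => X) i) hμ0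
          simpa [hμdef] using this
      have : Mono κ := inferInstance
      rw [← cancel_mono κ, hlk, zero_comp]
end

section
/- Let k be an algebraically closed field and C a k-linear abelian monoidal category all of whose Hom-spaces are finite-dimensional over k, whose tensor product is k-bilinear and exact in each variable, and whose monoidal unit I is a simple object. Then for all objects X, Y of C, the k-linear map Hom(I,X) ⊗_k Hom(I,Y) → Hom(I, X ⊗ Y) sending f ⊗ g to the composite I ≅ I ⊗ I →(f ⊗ g) X ⊗ Y (where I ≅ I ⊗ I is the inverse unitor) is injective. -/
open CategoryTheory CategoryTheory.Limits CategoryTheory.MonoidalCategory TensorProduct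

universe v u

variable {k : Type u} [Field k]
variable {C : Type u} [Category.{v} C] [Preadditive C] [Linear k C]
  [MonoidalCategory C] [MonoidalPreadditive C] [MonoidalLinear k C]

/-- The `k`-linear map `Hom(I,X) ⊗[k] Hom(I,Y) → Hom(I, X ⊗ Y)` sending `f ⊗ g` to the
composite `I ≅ I ⊗ I ⟶ X ⊗ Y` (inverse unitor followed by `f ⊗ g`). -/
noncomputable def homUnitTensor (X Y : C) :
    ((𝟙_ C ⟶ X) ⊗[k] (𝟙_ C ⟶ Y)) →ₗ[k] (𝟙_ C ⟶ X ⊗ Y) :=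
  TensorProduct.lift (LinearMap.mk₂ k
    (fun (f : 𝟙_ C ⟶ X) (g : 𝟙_ C ⟶ Y) => (λ_ (𝟙_ C)).inv ≫ (f ⊗ₘ g))
    (fun f f' g => by simp [MonoidalPreadditive.add_tensor, Preadditive.comp_add])
    (fun r f g => by
      simp [MonoidalCategory.tensorHom_def, MonoidalLinear.smul_whiskerRight,
        CategoryTheory.Linear.smul_comp, CategoryTheory.Linear.comp_smul])
    (fun f g g' => by simp [MonoidalPreadditive.tensor_add, Preadditive.comp_add])
    (fun r f g => by
      simp [MonoidalCategory.tensorHom_def, MonoidalLinear.whiskerLeft_smul,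
        CategoryTheory.Linear.smul_comp, CategoryTheory.Linear.comp_smul]))

lemma homUnitTensor_tmul (X Y : C) (f : 𝟙_ C ⟶ X) (g : 𝟙_ C ⟶ Y) :
    homUnitTensor (k := k) X Y (f ⊗ₜ g) = g ≫ (λ_ Y).inv ≫ (f ▷ Y) := by
  show (λ_ (𝟙_ C)).inv ≫ (f ⊗ₘ g) = g ≫ (λ_ Y).inv ≫ (f ▷ Y)
  rw [MonoidalCategory.tensorHom_def', ← Category.assoc, ← Category.assoc,
    ← MonoidalCategory.leftUnitor_inv_naturality]

/-- Key lemma: if `f i : I ⟶ X` is a linearly independent family, and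
`∑ i, g i ≫ (λ_ Y).inv ≫ (f i ▷ Y) = 0`, then all `g i = 0`. -/
lemma key_lemma {k : Type u} [Field k] [IsAlgClosed k]
    {C : Type u} [Category.{v} C] [Abelian C] [Linear k C]
    [∀ X Y : C, FiniteDimensional k (X ⟶ Y)]
    [MonoidalCategory C] [MonoidalPreadditive C] [MonoidalLinear k C]
    [∀ X : C, PreservesFiniteLimits (tensorRight X)]
    [Simple (𝟙_ C)] (Y : C) :
    ∀ (n : ℕ) (X : C) (f : Fin n → (𝟙_ C ⟶ X)), LinearIndependent k f →
      ∀ g : Fin n → (𝟙_ C ⟶ Y),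
        (∑ i, g i ≫ (λ_ Y).inv ≫ (f i ▷ Y)) = 0 → ∀ i, g i = 0 := by
  intro n
  induction n with
  | zero => intro X f _ g _ i; exact i.elim0
  | succ n ih =>
    intro X f hf g hsum
    set fl := f (Fin.last n) with hfl
    have hflne : fl ≠ 0 := hf.ne_zero (Fin.last n)
    haveI : Mono fl := mono_of_nonzero_from_simple hflne
    set q : X ⟶ cokernel fl := cokernel.π fl with hq
    haveI : Mono ((tensorRight Y).map fl) := inferInstance
    have monofl : Mono (fl ▷ Y) := by simpa using this
    -- linear independence of the composed family
    have hf' : LinearIndependent k (fun i : Fin n => f i.castSucc ≫ q) := by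
      rw [Fintype.linearIndependent_iff]
      intro a ha
      have ha' : (∑ i : Fin n, a i • f i.castSucc) ≫ q = 0 := by
        rw [Preadditive.sum_comp]
        simpa [CategoryTheory.Linear.smul_comp] using ha
      obtain ⟨c, hc⟩ := endomorphism_simple_eq_smul_id k
        (Abelian.monoLift fl (∑ i : Fin n, a i • f i.castSucc) ha')
      have hfac : c • fl = ∑ i : Fin n, a i • f i.castSucc := by
        have := Abelian.monoLift_comp fl (∑ i : Fin n, a i • f i.castSucc) ha'
        rw [← hc] at this
        simpa [CategoryTheory.Linear.smul_comp] using this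
      have hall := Fintype.linearIndependent_iff.mp hf (Fin.snoc a (-c)) ?_
      · intro i
        have := hall i.castSucc
        simpa using this
      · rw [Fin.sum_univ_castSucc]
        simp only [Fin.snoc_castSucc, Fin.snoc_last]
        rw [← hfac]
        simp [← hfl]
    -- compose the hypothesis with q ▷ Y
    have hsum' : (∑ i : Fin n, g i.castSucc ≫ (λ_ Y).inv ≫
        ((f i.castSucc ≫ q) ▷ Y)) = 0 := by
      have h0 : (∑ i, g i ≫ (λ_ Y).inv ≫ (f i ▷ Y)) ≫ (q ▷ Y) = 0 := by
        rw [hsum]; simp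
      rw [Preadditive.sum_comp, Fin.sum_univ_castSucc] at h0
      have hlast : (g (Fin.last n) ≫ (λ_ Y).inv ≫ (f (Fin.last n) ▷ Y)) ≫ (q ▷ Y) = 0 := by
        simp only [Category.assoc, ← MonoidalCategory.comp_whiskerRight, ← hfl, hq,
          cokernel.condition]
        simp
      rw [hlast, add_zero] at h0
      rw [← h0]
      apply Finset.sum_congr rfl
      intro i _
      simp [MonoidalCategory.comp_whiskerRight]
    have hzero := ih (cokernel fl) (fun i => f i.castSucc ≫ q) hf'
      (fun i => g i.castSucc) hsum'
    -- now the last one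
    intro i
    induction i using Fin.lastCases with
    | cast j => exact hzero j
    | last =>
      have hrest : ∀ i : Fin n, g i.castSucc ≫ (λ_ Y).inv ≫ (f i.castSucc ▷ Y) = 0 := by
        intro j; rw [show g j.castSucc = 0 from hzero j, zero_comp]
      rw [Fin.sum_univ_castSucc] at hsum
      rw [Finset.sum_eq_zero (fun j _ => hrest j), zero_add] at hsum
      haveI : Mono ((λ_ Y).inv ≫ (fl ▷ Y)) := @mono_comp _ _ _ _ _ _ inferInstance _ monofl
      exact zero_of_comp_mono ((λ_ Y).inv ≫ (fl ▷ Y)) hsum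

theorem stmt4 {k : Type u} [Field k] [IsAlgClosed k]
    {C : Type u} [Category.{v} C] [Abelian C] [Linear k C]
    [∀ X Y : C, FiniteDimensional k (X ⟶ Y)]
    [MonoidalCategory C] [MonoidalPreadditive C] [MonoidalLinear k C]
    [∀ X : C, PreservesFiniteLimits (tensorLeft X)]
    [∀ X : C, PreservesFiniteColimits (tensorLeft X)]
    [∀ X : C, PreservesFiniteLimits (tensorRight X)]
    [∀ X : C, PreservesFiniteColimits (tensorRight X)]
    [Simple (𝟙_ C)]
    (X Y : C) :
    Function.Injective (homUnitTensor (k := k) X Y) := by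
  rw [injective_iff_map_eq_zero]
  intro t ht
  set b := Module.finBasis k (𝟙_ C ⟶ X) with hb
  set c := Module.finBasis k (𝟙_ C ⟶ Y) with hc
  set B := b.tensorProduct c with hB
  have ht' : homUnitTensor (k := k) X Y (∑ p, B.repr t p • (b p.1 ⊗ₜ[k] c p.2)) = 0 := by
    rw [show (∑ p, B.repr t p • (b p.1 ⊗ₜ[k] c p.2)) = t from ?_]
    · exact ht
    · conv_rhs => rw [← B.sum_repr t]
      apply Finset.sum_congr rfl
      intro p _
      rw [hB, Module.Basis.tensorProduct_apply']
  rw [map_sum] at ht'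
  simp only [map_smul, homUnitTensor_tmul] at ht'
  rw [Fintype.sum_prod_type] at ht'
  have ht'' : (∑ i, (∑ j, B.repr t (i, j) • c j) ≫ (λ_ Y).inv ≫ (b i ▷ Y)) = 0 := by
    rw [← ht']
    apply Finset.sum_congr rfl
    intro i _
    rw [Preadditive.sum_comp]
    apply Finset.sum_congr rfl
    intro j _
    rw [CategoryTheory.Linear.smul_comp]
  have hg := key_lemma Y _ X b b.linearIndependent (fun i => ∑ j, B.repr t (i, j) • c j) ht''
  have hcoeff : ∀ p : (Fin (Module.finrank k (𝟙_ C ⟶ X)) × Fin (Module.finrank k (𝟙_ C ⟶ Y))),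
      B.repr t p = 0 := by
    rintro ⟨i, j⟩
    exact Fintype.linearIndependent_iff.mp c.linearIndependent
      (fun j => B.repr t (i, j)) (hg i) j
  have : B.repr t = 0 := by
    ext p
    exact hcoeff p
  have := congrArg (B.repr.symm) this
  simpa using this
end

section
/- Let k be an algebraically closed field and C a k-linear abelian monoidal category all of whose Hom-spaces are finite-dimensional over k, whose tensor product is k-bilinear and exact in each variable, and whose monoidal unit I is a simple object. Then for all objects X, Y of C, the k-linear map End(X) ⊗_k Hom(I,Y) → Hom(X, X ⊗ Y) sending h ⊗ g to the composite X ≅ X ⊗ I →(h ⊗ g) X ⊗ Y (where X ≅ X ⊗ I is the inverse right unitor) is injective. -/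
open CategoryTheory CategoryTheory.Limits CategoryTheory.MonoidalCategory TensorProduct

universe v u

variable {k : Type u} [Field k]
variable {C : Type u} [Category.{v} C] [Preadditive C] [Linear k C]
  [MonoidalCategory C] [MonoidalPreadditive C] [MonoidalLinear k C]

/-- The `k`-linear map `End(X) ⊗[k] Hom(I,Y) → Hom(X, X ⊗ Y)` sending `h ⊗ g` to the
composite `X ≅ X ⊗ I ⟶ X ⊗ Y` (inverse right unitor followed by `h ⊗ g`). -/
noncomputable def endTensorHom (X Y : C) :
    ((X ⟶ X) ⊗[k] (𝟙_ C ⟶ Y)) →ₗ[k] (X ⟶ X ⊗ Y) :=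
  TensorProduct.lift (LinearMap.mk₂ k
    (fun (h : X ⟶ X) (g : 𝟙_ C ⟶ Y) => (ρ_ X).inv ≫ (h ⊗ₘ g))
    (fun h h' g => by simp [MonoidalPreadditive.add_tensor, Preadditive.comp_add])
    (fun r h g => by
      simp [MonoidalCategory.tensorHom_def, MonoidalLinear.smul_whiskerRight,
        CategoryTheory.Linear.smul_comp, CategoryTheory.Linear.comp_smul])
    (fun h g g' => by simp [MonoidalPreadditive.tensor_add, Preadditive.comp_add])
    (fun r h g => by
      simp [MonoidalCategory.tensorHom_def, MonoidalLinear.whiskerLeft_smul,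
        CategoryTheory.Linear.smul_comp, CategoryTheory.Linear.comp_smul]))

/-- Every element of `M ⊗ N` can be written as `∑ i, h i ⊗ b i` for a basis `b` of `N`. -/
lemma exists_repr {M N : Type*} [AddCommGroup M] [Module k M] [AddCommGroup N] [Module k N]
    {n : ℕ} (b : Module.Basis (Fin n) k N) (t : M ⊗[k] N) :
    ∃ h : Fin n → M, t = ∑ i, h i ⊗ₜ[k] b i := by
  induction t with
  | zero => exact ⟨0, by simp⟩
  | tmul m y =>
      refine ⟨fun i => b.repr y i • m, ?_⟩
      conv_lhs => rw [← b.sum_repr y, tmul_sum]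
      simp [TensorProduct.smul_tmul]
  | add s t hs ht =>
      obtain ⟨h, rfl⟩ := hs
      obtain ⟨h', rfl⟩ := ht
      exact ⟨h + h', by simp [Finset.sum_add_distrib, TensorProduct.add_tmul]⟩

section Key

variable {k : Type u} [Field k] [IsAlgClosed k]
    {C : Type u} [Category.{v} C] [Abelian C] [Linear k C]
    [∀ X Y : C, FiniteDimensional k (X ⟶ Y)]
    [MonoidalCategory C] [MonoidalPreadditive C] [MonoidalLinear k C]
    [∀ X : C, PreservesFiniteLimits (tensorLeft X)]
    [Simple (𝟙_ C)]

lemma key (X : C) : ∀ (n : ℕ) (Y : C) (g : Fin n → (𝟙_ C ⟶ Y)),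
    LinearIndependent k g → ∀ h : Fin n → (X ⟶ X),
    (∑ i, h i ≫ ((ρ_ X).inv ≫ (X ◁ g i))) = 0 → ∀ i, h i = 0 := by
  intro n
  induction n with
  | zero => intro Y g hg h hsum i; exact i.elim0
  | succ n IH =>
      intro Y g hg h hsum
      set gl := g (Fin.last n) with hgl
      have hne : gl ≠ 0 := hg.ne_zero _
      haveI : Mono gl := mono_of_nonzero_from_simple hne
      set π := cokernel.π gl with hπ
      set g' : Fin n → (𝟙_ C ⟶ cokernel gl) := fun i => g i.castSucc ≫ π with hg'
      -- linear independence of g'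
      have hg'li : LinearIndependent k g' := by
        rw [Fintype.linearIndependent_iff]
        intro c hc
        have hw : (∑ i, c i • g i.castSucc) ≫ π = 0 := by
          rw [Preadditive.sum_comp]
          simpa [CategoryTheory.Linear.smul_comp] using hc
        obtain ⟨μ, hμ⟩ := CategoryTheory.endomorphism_simple_eq_smul_id k
          (Abelian.monoLift gl _ hw)
        have hfac : (∑ i, c i • g i.castSucc) = μ • gl := by
          rw [← Abelian.monoLift_comp gl _ hw, ← hμ, CategoryTheory.Linear.smul_comp,
            Category.id_comp]
        have := Fintype.linearIndependent_iff.mp hg (Fin.snoc c (-μ)) ?_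
        · intro i
          simpa using this i.castSucc
        · rw [Fin.sum_univ_castSucc]
          simp only [Fin.snoc_castSucc, Fin.snoc_last]
          rw [hfac]
          simp [add_neg_cancel, neg_smul, hgl]
      -- kill the first n components via IH
      have hcast : ∀ i : Fin n, h i.castSucc = 0 := by
        apply IH (cokernel gl) g' hg'li
        have hc := congrArg (fun f => f ≫ (X ◁ π)) hsum
        simp only [Preadditive.sum_comp, Category.assoc, zero_comp] at hc
        rw [← hc, Fin.sum_univ_castSucc]
        have hlast : (X ◁ (gl ≫ π)) = 0 := by
          rw [hπ, cokernel.condition]; simp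
        simp only [← MonoidalCategory.whiskerLeft_comp, hg', ← hgl, hlast, comp_zero, add_zero]
      -- now only the last term remains
      have hlastzero : h (Fin.last n) ≫ ((ρ_ X).inv ≫ (X ◁ gl)) = 0 := by
        rw [Fin.sum_univ_castSucc] at hsum
        simpa [hcast] using hsum
      have hmono : Mono (X ◁ gl) := by
        have : Mono ((tensorLeft X).map gl) := (tensorLeft X).map_mono gl
        simpa using this
      haveI := hmono
      haveI : Mono ((ρ_ X).inv ≫ (X ◁ gl)) := mono_comp _ _
      have hlast0 : h (Fin.last n) = 0 := by
        have heq : h (Fin.last n) ≫ ((ρ_ X).inv ≫ (X ◁ gl)) = 0 ≫ ((ρ_ X).inv ≫ (X ◁ gl)) := by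
          simpa using hlastzero
        exact (cancel_mono _).mp heq
      exact Fin.lastCases hlast0 hcast

end Key

theorem stmt5 {k : Type u} [Field k] [IsAlgClosed k]
    {C : Type u} [Category.{v} C] [Abelian C] [Linear k C]
    [∀ X Y : C, FiniteDimensional k (X ⟶ Y)]
    [MonoidalCategory C] [MonoidalPreadditive C] [MonoidalLinear k C]
    [∀ X : C, PreservesFiniteLimits (tensorLeft X)]
    [∀ X : C, PreservesFiniteColimits (tensorLeft X)]
    [∀ X : C, PreservesFiniteLimits (tensorRight X)]
    [∀ X : C, PreservesFiniteColimits (tensorRight X)]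
    [Simple (𝟙_ C)]
    (X Y : C) :
    Function.Injective (endTensorHom (k := k) X Y) := by
  rw [injective_iff_map_eq_zero]
  intro t ht
  obtain ⟨h, rfl⟩ := exists_repr (Module.finBasis k (𝟙_ C ⟶ Y)) t
  set b := Module.finBasis k (𝟙_ C ⟶ Y)
  have hval : ∀ (hh : X ⟶ X) (g : 𝟙_ C ⟶ Y),
      endTensorHom (k := k) X Y (hh ⊗ₜ g) = hh ≫ ((ρ_ X).inv ≫ (X ◁ g)) := by
    intro hh g
    simp only [endTensorHom, TensorProduct.lift.tmul, LinearMap.mk₂_apply]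
    rw [MonoidalCategory.tensorHom_def, ← Category.assoc, ← rightUnitor_inv_naturality,
      Category.assoc]
  have hsum : (∑ i, h i ≫ ((ρ_ X).inv ≫ (X ◁ b i))) = 0 := by
    rw [← ht, map_sum]
    exact Finset.sum_congr rfl fun i _ => (hval _ _).symm
  have := key (k := k) X _ Y (fun i => b i) b.linearIndependent h hsum
  simp [this]
end

section
/- Let C be a rigid monoidal category with unit I in which the canonical end A = ∫_{X∈C} X ⊗ X^∨ exists, with end projections π_X : A → X ⊗ X^∨. Then the map sending a morphism φ : I → A to the family of morphisms whose component at an object X is the composite X ≅ I ⊗ X →(φ ⊗ id_X) A ⊗ X →(π_X ⊗ id_X) (X ⊗ X^∨) ⊗ X ≅ X ⊗ (X^∨ ⊗ X) →(id_X ⊗ ev_X) X ⊗ I ≅ X is a bijection from Hom_C(I, A) onto the set of natural transformations 𝟭_C ⟶ 𝟭_C of the identity functor of C. -/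
open CategoryTheory CategoryTheory.Limits CategoryTheory.MonoidalCategory

universe v u

/-- The canonical end `A = ∫_{X ∈ C} X ⊗ Xᘁ` of a right rigid monoidal category,
encoded via its universal property. -/
structure CanonicalEnd (C : Type u) [Category.{v} C] [MonoidalCategory C]
    [RightRigidCategory C] where
  A : C
  π : ∀ X : C, A ⟶ X ⊗ Xᘁ
  wedge : ∀ {X Y : C} (f : X ⟶ Y), π X ≫ (f ⊗ₘ 𝟙 (Xᘁ)) = π Y ≫ (𝟙 Y ⊗ₘ fᘁ)
  lift : ∀ {B : C} (q : ∀ X : C, B ⟶ X ⊗ Xᘁ),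
    (∀ {X Y : C} (f : X ⟶ Y), q X ≫ (f ⊗ₘ 𝟙 (Xᘁ)) = q Y ≫ (𝟙 Y ⊗ₘ fᘁ)) → (B ⟶ A)
  fac : ∀ {B : C} (q : ∀ X : C, B ⟶ X ⊗ Xᘁ)
    (hq : ∀ {X Y : C} (f : X ⟶ Y), q X ≫ (f ⊗ₘ 𝟙 (Xᘁ)) = q Y ≫ (𝟙 Y ⊗ₘ fᘁ))
    (X : C), lift q hq ≫ π X = q X
  hom_ext : ∀ {B : C} (u v : B ⟶ A), (∀ X : C, u ≫ π X = v ≫ π X) → u = v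

/-- The endomorphism of `X` associated to a morphism `φ : 𝟙_ C ⟶ A`: the composite
`X ≅ I ⊗ X ⟶ A ⊗ X ⟶ (X ⊗ Xᘁ) ⊗ X ≅ X ⊗ (Xᘁ ⊗ X) ⟶ X ⊗ I ≅ X`. -/
def CanonicalEnd.toEnd {C : Type u} [Category.{v} C] [MonoidalCategory C]
    [RightRigidCategory C] (E : CanonicalEnd C) (φ : 𝟙_ C ⟶ E.A) (X : C) : X ⟶ X :=
  (λ_ X).inv ≫ (φ ⊗ₘ 𝟙 X) ≫ (E.π X ⊗ₘ 𝟙 X) ≫ (α_ X (Xᘁ) X).hom ≫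
    (𝟙 X ⊗ₘ ε_ X (Xᘁ)) ≫ (ρ_ X).hom

section Aux

variable {C : Type u} [Category.{v} C] [MonoidalCategory C] [RightRigidCategory C]

noncomputable def endOf {X Y : C} (g : 𝟙_ C ⟶ Y ⊗ Xᘁ) : X ⟶ Y :=
  (λ_ X).inv ≫ (g ⊗ₘ 𝟙 X) ≫ (α_ Y (Xᘁ) X).hom ≫ (𝟙 Y ⊗ₘ ε_ X (Xᘁ)) ≫ (ρ_ Y).hom

lemma L1 {X : C} (h : X ⟶ X) : endOf (η_ X (Xᘁ) ≫ h ▷ (Xᘁ)) = h := by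
  simp only [endOf, tensorHom_id, id_tensorHom, comp_whiskerRight, Category.assoc]
  rw [associator_naturality_left_assoc, ← whisker_exchange_assoc]
  slice_lhs 2 4 => rw [ExactPairing.evaluation_coevaluation]
  simp

lemma L2 {X : C} (g : 𝟙_ C ⟶ X ⊗ Xᘁ) : η_ X (Xᘁ) ≫ (endOf g) ▷ (Xᘁ) = g := by
  simp only [endOf, tensorHom_id, id_tensorHom]
  calc η_ X (Xᘁ) ≫ ((λ_ X).inv ≫ g ▷ X ≫ (α_ X (Xᘁ) X).hom ≫ X ◁ ε_ X (Xᘁ) ≫ (ρ_ X).hom) ▷ (Xᘁ)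
      = 𝟙 _ ⊗≫ (𝟙_ C ◁ η_ X (Xᘁ) ≫ g ▷ (X ⊗ Xᘁ)) ⊗≫ X ◁ ε_ X (Xᘁ) ▷ (Xᘁ) ⊗≫ 𝟙 _ := by
        monoidal
    _ = g ⊗≫ X ◁ ((Xᘁ) ◁ η_ X (Xᘁ) ⊗≫ ε_ X (Xᘁ) ▷ (Xᘁ)) ⊗≫ 𝟙 _ := by
        rw [whisker_exchange]; monoidal
    _ = g := by rw [ExactPairing.coevaluation_evaluation'']; monoidal

lemma N1 {X Y Z : C} (g : 𝟙_ C ⟶ Z ⊗ Xᘁ) (f : Z ⟶ Y) :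
    endOf (g ≫ (f ⊗ₘ 𝟙 (Xᘁ))) = endOf (X := X) g ≫ f := by
  simp only [endOf, tensorHom_id, id_tensorHom, comp_whiskerRight, Category.assoc]
  rw [associator_naturality_left_assoc, ← whisker_exchange_assoc]
  simp

lemma N2 {X Y : C} (g : 𝟙_ C ⟶ Y ⊗ Yᘁ) (f : X ⟶ Y) :
    endOf (g ≫ (𝟙 Y ⊗ₘ fᘁ)) = f ≫ endOf g := by
  simp only [endOf, tensorHom_id, id_tensorHom]
  rw [comp_whiskerRight, Category.assoc, associator_naturality_middle_assoc,
    ← MonoidalCategory.whiskerLeft_comp_assoc, rightAdjointMate_comp_evaluation,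
    MonoidalCategory.whiskerLeft_comp_assoc, ← associator_naturality_right_assoc,
    ← whisker_exchange_assoc]
  simp

lemma toEnd_eq (E : CanonicalEnd C) (φ : 𝟙_ C ⟶ E.A) (X : C) :
    E.toEnd φ X = endOf (φ ≫ E.π X) := by
  simp only [CanonicalEnd.toEnd, endOf, tensorHom_comp_tensorHom_assoc, Category.comp_id]

end Aux

theorem stmt8 {C : Type u} [Category.{v} C] [MonoidalCategory C] [RightRigidCategory C]
    (E : CanonicalEnd C) :
    (∀ (φ : 𝟙_ C ⟶ E.A) {X Y : C} (f : X ⟶ Y),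
        f ≫ E.toEnd φ Y = E.toEnd φ X ≫ f) ∧
      ∀ θ : 𝟭 C ⟶ 𝟭 C, ∃! φ : 𝟙_ C ⟶ E.A, ∀ X : C, θ.app X = E.toEnd φ X := by
  constructor
  · intro φ X Y f
    rw [toEnd_eq, toEnd_eq, ← N2 (φ ≫ E.π Y) f, ← N1 (φ ≫ E.π X) f,
      Category.assoc, Category.assoc, E.wedge f]
  · intro θ
    have hq : ∀ {X Y : C} (f : X ⟶ Y),
        (η_ X (Xᘁ) ≫ θ.app X ▷ (Xᘁ)) ≫ (f ⊗ₘ 𝟙 (Xᘁ)) =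
        (η_ Y (Yᘁ) ≫ θ.app Y ▷ (Yᘁ)) ≫ (𝟙 Y ⊗ₘ fᘁ) := by
      intro X Y f
      have hθ : θ.app X ≫ f = f ≫ θ.app Y := by simpa using (θ.naturality f).symm
      simp only [Functor.id_obj]
      simp only [tensorHom_id, id_tensorHom, Category.assoc, ← comp_whiskerRight,
        hθ]
      rw [← whisker_exchange, coevaluation_comp_rightAdjointMate_assoc,
        ← comp_whiskerRight]
    refine ⟨E.lift _ hq, fun X => ?_, fun ψ hψ => ?_⟩
    · rw [toEnd_eq, E.fac _ hq, L1]
    · apply E.hom_ext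
      intro X
      rw [E.fac _ hq, ← L2 (ψ ≫ E.π X), ← toEnd_eq, ← hψ X]
end

section
/- Let C be a braided monoidal category with braiding c and balancing θ, and let A be an object of C. Then θ_{A^{⊗n}} = id_{A^{⊗n}} for all n ≥ 1 if and only if θ_A = id_A and c_{A,A} ∘ c_{A,A} = id_{A ⊗ A}. -/
open CategoryTheory CategoryTheory.MonoidalCategory

universe v u

/-- Monoidal powers: `tpow A 0 = 𝟙_ C` and `tpow A (n+1) = A ⊗ tpow A n`. -/
def tpow {C : Type u} [Category.{v} C] [MonoidalCategory C] (A : C) : ℕ → C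
  | 0 => 𝟙_ C
  | n + 1 => A ⊗ tpow A n

lemma aux_sq {C : Type u} [Category.{v} C] [MonoidalCategory C] [BraidedCategory C]
    (A X Y : C) (hX : (β_ A X).hom ≫ (β_ X A).hom = 𝟙 _)
    (hY : (β_ A Y).hom ≫ (β_ Y A).hom = 𝟙 _) :
    (β_ A (X ⊗ Y)).hom ≫ (β_ (X ⊗ Y) A).hom = 𝟙 _ := by
  rw [BraidedCategory.braiding_tensor_right_hom, BraidedCategory.braiding_tensor_left_hom]
  simp only [Category.assoc, Iso.inv_hom_id_assoc]
  rw [← MonoidalCategory.whiskerLeft_comp_assoc, hY, MonoidalCategory.whiskerLeft_id,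
    Category.id_comp, Iso.hom_inv_id_assoc, ← MonoidalCategory.comp_whiskerRight_assoc, hX,
    MonoidalCategory.id_whiskerRight, Category.id_comp, Iso.inv_hom_id]

lemma aux_tpow {C : Type u} [Category.{v} C] [MonoidalCategory C] [BraidedCategory C]
    (A : C) (hββ : (β_ A A).hom ≫ (β_ A A).hom = 𝟙 (A ⊗ A)) :
    ∀ n : ℕ, (β_ A (tpow A n)).hom ≫ (β_ (tpow A n) A).hom = 𝟙 _
  | 0 => by
      simp [tpow, braiding_tensorUnit_right,
        braiding_tensorUnit_left]
  | n + 1 => aux_sq A A (tpow A n) hββ (aux_tpow A hββ n)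

theorem stmt10 {C : Type u} [Category.{v} C] [MonoidalCategory C] [BraidedCategory C]
    (θ : 𝟭 C ≅ 𝟭 C)
    (hθI : θ.hom.app (𝟙_ C) = 𝟙 (𝟙_ C))
    (hθmul : ∀ X Y : C, θ.hom.app (X ⊗ Y) =
      (θ.hom.app X ⊗ₘ θ.hom.app Y) ≫ (β_ X Y).hom ≫ (β_ Y X).hom)
    (A : C) :
    (∀ n : ℕ, 1 ≤ n → θ.hom.app (tpow A n) = 𝟙 (tpow A n)) ↔
      (θ.hom.app A = 𝟙 A ∧ (β_ A A).hom ≫ (β_ A A).hom = 𝟙 (A ⊗ A)) := by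
  constructor
  · intro h
    have h1 : θ.hom.app (A ⊗ 𝟙_ C) = 𝟙 _ := h 1 le_rfl
    -- θ_A = id via naturality along ρ
    have hnatρ := θ.hom.naturality (ρ_ A).hom
    simp only [Functor.id_map, h1] at hnatρ
    have hA : θ.hom.app A = 𝟙 A := by
      have h' : (ρ_ A).hom ≫ θ.hom.app A = (ρ_ A).hom ≫ 𝟙 A := by
        simpa using hnatρ
      exact (cancel_epi (ρ_ A).hom).1 h' 
    refine ⟨hA, ?_⟩
    have h2 : θ.hom.app (A ⊗ (A ⊗ 𝟙_ C)) = 𝟙 _ := h 2 (by norm_num)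
    rw [hθmul, hA, h1] at h2
    simp only [Functor.id_obj, MonoidalCategory.id_tensorHom_id, Category.id_comp] at h2
    -- β_{A, A⊗I} ≫ β_{A⊗I, A} = id ; transfer along id ⊗ ρ
    have hnat := BraidedCategory.braiding_naturality (𝟙 A) (ρ_ A).hom
    have hnat' := BraidedCategory.braiding_naturality (ρ_ A).hom (𝟙 A)
    have key : (𝟙 A ⊗ₘ (ρ_ A).hom) ≫ (β_ A A).hom ≫ (β_ A A).hom
        = (β_ A (A ⊗ 𝟙_ C)).hom ≫ (β_ (A ⊗ 𝟙_ C) A).hom ≫ (𝟙 A ⊗ₘ (ρ_ A).hom) := by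
      rw [← Category.assoc, hnat, Category.assoc, hnat']
    have key2 : (𝟙 A ⊗ₘ (ρ_ A).hom) ≫ (β_ A A).hom ≫ (β_ A A).hom
        = (𝟙 A ⊗ₘ (ρ_ A).hom) ≫ 𝟙 (A ⊗ A) := by
      rw [key, ← Category.assoc, h2, Category.id_comp, Category.comp_id]
    exact (cancel_epi (𝟙 A ⊗ₘ (ρ_ A).hom)).1 key2
  · rintro ⟨hA, hββ⟩
    intro n _
    induction n with
    | zero => simpa [tpow] using hθI
    | succ n ih =>
      have hθn : θ.hom.app (tpow A n) = 𝟙 _ := by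
        cases n with
        | zero => simpa [tpow] using hθI
        | succ m => exact ih (Nat.succ_le_succ (Nat.zero_le m))
      simp only [Functor.id_obj] at hθn
      rw [show tpow A (n+1) = A ⊗ tpow A n from rfl, hθmul, hA, hθn]
      simp [aux_tpow A hββ n]
end

section
/- Let k be a field and let V and W be nonzero finite-dimensional k-vector spaces. Let A : V → V and B : W → W be k-linear automorphisms such that the induced linear map A ⊗ B on V ⊗_k W is the identity of V ⊗_k W. Then there exists λ ∈ kˣ such that A = λ · id_V and B = λ^{-1} · id_W. -/
open TensorProduct

universe u

theorem stmt13 {k : Type u} [Field k]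
    {V W : Type u} [AddCommGroup V] [Module k V] [AddCommGroup W] [Module k W]
    [FiniteDimensional k V] [FiniteDimensional k W] [Nontrivial V] [Nontrivial W]
    (A : V ≃ₗ[k] V) (B : W ≃ₗ[k] W)
    (h : TensorProduct.map (A : V →ₗ[k] V) (B : W →ₗ[k] W) = LinearMap.id) :
    ∃ c : kˣ, (A : V →ₗ[k] V) = (c : k) • LinearMap.id ∧
      (B : W →ₗ[k] W) = ((c⁻¹ : kˣ) : k) • LinearMap.id := by
  obtain ⟨v₀, hv₀⟩ := exists_ne (0 : V)
  obtain ⟨w₀, hw₀⟩ := exists_ne (0 : W)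
  have key : ∀ (v : V) (w : W), (A v) ⊗ₜ[k] (B w) = v ⊗ₜ[k] w := by
    intro v w
    have := DFunLike.congr_fun h (v ⊗ₜ[k] w)
    simpa using this
  -- dual functionals
  have hBw₀ : B w₀ ≠ 0 := fun hc => hw₀ (by simpa using B.injective (by simpa using hc))
  have hAv₀ : A v₀ ≠ 0 := fun hc => hv₀ (by simpa using A.injective (by simpa using hc))
  obtain ⟨f, hf⟩ : ∃ f : Module.Dual k W, f (B w₀) ≠ 0 := by
    by_contra hc
    push_neg at hc
    exact hBw₀ ((Module.forall_dual_apply_eq_zero_iff k (B w₀)).mp hc)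
  obtain ⟨e, he⟩ : ∃ e : Module.Dual k V, e (A v₀) ≠ 0 := by
    by_contra hc
    push_neg at hc
    exact hAv₀ ((Module.forall_dual_apply_eq_zero_iff k (A v₀)).mp hc)
  -- contract second factor with f
  have keyV : ∀ v : V, f (B w₀) • A v = f w₀ • v := by
    intro v
    have := congrArg (TensorProduct.lift (((LinearMap.lsmul k V).comp f).flip)) (key v w₀)
    simpa using this
  have keyW : ∀ w : W, e (A v₀) • B w = e v₀ • w := by
    intro w
    have := congrArg (TensorProduct.lift ((LinearMap.lsmul k W).comp e)) (key v₀ w)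
    simpa using this
  set a : k := f w₀ / f (B w₀) with ha
  set b : k := e v₀ / e (A v₀) with hb
  have hA : ∀ v : V, A v = a • v := by
    intro v
    rw [ha, div_eq_mul_inv, mul_comm, mul_smul, ← keyV v, smul_smul,
      inv_mul_cancel₀ hf, one_smul]
  have hB : ∀ w : W, B w = b • w := by
    intro w
    rw [hb, div_eq_mul_inv, mul_comm, mul_smul, ← keyW w, smul_smul,
      inv_mul_cancel₀ he, one_smul]
  have ha0 : a ≠ 0 := by
    intro hc
    apply hAv₀
    rw [hA v₀, hc, zero_smul]
  have hb0 : b ≠ 0 := by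
    intro hc
    apply hBw₀
    rw [hB w₀, hc, zero_smul]
  have hev₀ : e v₀ ≠ 0 := by
    intro hc
    apply he
    rw [hA v₀, map_smul, hc, smul_zero]
  have hfw₀ : f w₀ ≠ 0 := by
    intro hc
    apply hf
    rw [hB w₀, map_smul, hc, smul_zero]
  have hab : a * b = 1 := by
    have hfb : f (B w₀) = b * f w₀ := by rw [hB w₀, map_smul, smul_eq_mul]
    rw [ha, hfb]
    field_simp
  refine ⟨Units.mk a b hab (by rw [mul_comm]; exact hab), ?_, ?_⟩
  · ext v; simpa using hA v
  · ext w
    have : ((Units.mk a b hab (by rw [mul_comm]; exact hab))⁻¹ : kˣ) = (b : k) := rfl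
    simp [this, hB w]
end

section
/- Let k be a field, V a nonzero finite-dimensional k-vector space, and L : V → V a k-linear automorphism with the property that every integer power of L that is a scalar multiple of the identity is equal to the identity of V. Let g ≥ 1 and let n_1, …, n_g be integers. Then the linear endomorphism L^{n_1} ⊗ ⋯ ⊗ L^{n_g} of the g-fold tensor power V^{⊗g} is the identity if and only if L^{n_i} = id_V for every i = 1, …, g. In particular, if L has finite order N in GL(V), this holds if and only if N divides n_i for every i, and if L has infinite order it holds if and only if n_i = 0 for every i. -/
open TensorProduct PiTensorProduct

universe u

theorem stmt14 {k : Type u} [Field k]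
    {V : Type u} [AddCommGroup V] [Module k V] [FiniteDimensional k V] [Nontrivial V]
    (L : V ≃ₗ[k] V)
    (hL : ∀ m : ℤ, (∃ c : k, ((L ^ m : V ≃ₗ[k] V) : V →ₗ[k] V) = c • LinearMap.id) →
      L ^ m = 1)
    (g : ℕ) (hg : 1 ≤ g) (n : Fin g → ℤ) :
    PiTensorProduct.map (fun i : Fin g => ((L ^ (n i) : V ≃ₗ[k] V) : V →ₗ[k] V)) =
        (LinearMap.id : (⨂[k] _ : Fin g, V) →ₗ[k] ⨂[k] _ : Fin g, V) ↔
      ∀ i : Fin g, L ^ (n i) = 1 := by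
  constructor
  · intro h
    have hd : 0 < Module.finrank k V := Module.finrank_pos
    let b : Module.Basis (Fin (Module.finrank k V)) k V := Module.finBasis k V
    obtain ⟨x0⟩ := Fin.pos_iff_nonempty.mp hd
    set M : Fin g → (V →ₗ[k] V) := fun j => ((L ^ (n j) : V ≃ₗ[k] V) : V →ₗ[k] V) with hM
    set m : Fin g → Fin (Module.finrank k V) → Fin (Module.finrank k V) → k :=
      fun j x y => b.repr (M j (b x)) y with hm
    have hF : ∀ (p : Fin g → Fin (Module.finrank k V)) (v : Fin g → V),
        PiTensorProduct.lift ((MultilinearMap.mkPiAlgebra k (Fin g) k).compLinearMap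
          (fun j => b.coord (p j))) (tprod k v) = ∏ j, b.repr (v j) (p j) := by
      intro p v
      simp [Module.Basis.coord_apply]
    have key : ∀ a p : Fin g → Fin (Module.finrank k V),
        (∏ j, m j (a j) (p j)) = ∏ j, (if a j = p j then (1:k) else 0) := by
      intro a p
      have h1 : PiTensorProduct.map M (tprod k fun j => b (a j)) = tprod k fun j => b (a j) := by
        rw [h]; rfl
      rw [PiTensorProduct.map_tprod] at h1
      have h2 := congrArg (PiTensorProduct.lift
        ((MultilinearMap.mkPiAlgebra k (Fin g) k).compLinearMap (fun j => b.coord (p j)))) h1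
      rw [hF, hF] at h2
      simpa [Module.Basis.repr_self, Finsupp.single_apply] using h2
    -- diagonal products are 1
    have diag : ∀ a : Fin g → Fin (Module.finrank k V), (∏ j, m j (a j) (a j)) = 1 := by
      intro a
      have := key a a
      simpa using this
    have dne : ∀ (a : Fin g → Fin (Module.finrank k V)) (i : Fin g), m i (a i) (a i) ≠ 0 := by
      intro a i hz
      have := diag a
      rw [Finset.prod_eq_zero (Finset.mem_univ i) hz] at this
      exact zero_ne_one this
    -- the erased product is nonzero
    have tne : ∀ i : Fin g, (∏ j ∈ Finset.univ.erase i, m j x0 x0) ≠ 0 := by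
      intro i hz
      have h1 := diag (fun _ => x0)
      rw [← Finset.mul_prod_erase Finset.univ _ (Finset.mem_univ i), hz, mul_zero] at h1
      exact zero_ne_one h1
    -- off-diagonal entries vanish
    have offd : ∀ (i : Fin g) (x y : Fin (Module.finrank k V)), x ≠ y → m i x y = 0 := by
      intro i x y hxy
      have hk := key (Function.update (fun _ => x0) i x) (Function.update (fun _ => x0) i y)
      rw [← Finset.mul_prod_erase Finset.univ _ (Finset.mem_univ i),
          ← Finset.mul_prod_erase Finset.univ
            (fun j => if Function.update (fun _ => x0) i x j = Function.update (fun _ => x0) i y j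
              then (1:k) else 0) (Finset.mem_univ i)] at hk
      simp only [Function.update_self] at hk
      rw [if_neg hxy] at hk
      have hprod : (∏ j ∈ Finset.univ.erase i,
          m j (Function.update (fun _ => x0) i x j) (Function.update (fun _ => x0) i y j))
          = ∏ j ∈ Finset.univ.erase i, m j x0 x0 := by
        apply Finset.prod_congr rfl
        intro j hj
        rw [Function.update_of_ne (Finset.ne_of_mem_erase hj),
            Function.update_of_ne (Finset.ne_of_mem_erase hj)]
      rw [hprod, zero_mul] at hk
      exact (mul_eq_zero.mp hk).resolve_right (tne i)
    -- diagonal entries are constant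
    have diagc : ∀ (i : Fin g) (x : Fin (Module.finrank k V)), m i x x = m i x0 x0 := by
      intro i x
      have h1 := diag (Function.update (fun _ => x0) i x)
      have h2 := diag (fun _ => x0)
      rw [← Finset.mul_prod_erase Finset.univ _ (Finset.mem_univ i)] at h1 h2
      simp only [Function.update_self] at h1
      have hprod : (∏ j ∈ Finset.univ.erase i,
          m j (Function.update (fun _ => x0) i x j) (Function.update (fun _ => x0) i x j))
          = ∏ j ∈ Finset.univ.erase i, m j x0 x0 := by
        apply Finset.prod_congr rfl
        intro j hj
        rw [Function.update_of_ne (Finset.ne_of_mem_erase hj)]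
      rw [hprod] at h1
      have := tne i
      -- h1 : m i x x * t = 1, h2 : m i x0 x0 * t = 1
      have := h1.trans h2.symm
      exact mul_right_cancel₀ (tne i) this
    -- each M i is scalar
    intro i
    apply hL
    refine ⟨m i x0 x0, ?_⟩
    apply b.ext
    intro x
    apply b.repr.injective
    ext y
    simp only [LinearMap.smul_apply, LinearMap.id_apply, map_smul, Module.Basis.repr_self,
      Finsupp.smul_apply, Finsupp.single_apply, smul_eq_mul]
    by_cases hxy : x = y
    · subst hxy
      simp
      exact diagc i x
    · rw [if_neg hxy, mul_zero]
      exact offd i x y hxy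
  · intro h
    have : (fun i : Fin g => ((L ^ (n i) : V ≃ₗ[k] V) : V →ₗ[k] V))
        = fun _ : Fin g => LinearMap.id := by
      funext i
      rw [h i]
      rfl
    rw [this, PiTensorProduct.map_id]
end
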